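/- The subgroup of PSL₂(ℤ) generated by the two elements ABAB and AB⁻¹AB⁻¹ has finite index in PSL₂(ℤ). -/

import Mathlib

open scoped MatrixGroups

noncomputable section

/-- The class `A` of the matrix `[[0,−1],[1,0]]` in `PSL₂(ℤ)`. -/
def Aelt : PSL(2, ℤ) :=
  QuotientGroup.mk (⟨!![0, -1; 1, 0], by norm_num [Matrix.det_fin_two_of]⟩ :
    Matrix.SpecialLinearGroup (Fin 2) ℤ)

/-- The class `B` of the matrix `[[0,−1],[1,1]]` in `PSL₂(ℤ)`. -/
def Belt : PSL(2, ℤ) :=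
  QuotientGroup.mk (⟨!![0, -1; 1, 1], by norm_num [Matrix.det_fin_two_of]⟩ :
    Matrix.SpecialLinearGroup (Fin 2) ℤ)

/-!
With `S = [[0,-1],[1,0]]` and `T = [[1,1],[0,1]]` we have `A = S` and `B = ST`, so `ABAB` and
`AB⁻¹AB⁻¹` lift to `T² = [[1,2],[0,1]]` and `ST⁻²S⁻¹ = [[1,0],[2,1]]`. Together with `-1` these
generate the principal congruence subgroup `Γ(2)`, which has finite index: for `g = [[a,b],[c,d]]`
in `Γ(2)` the entry `a` is odd and `c` even, so a Euclidean algorithm with even quotients,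
multiplying on the left by powers of `T²` and `ST⁻²S⁻¹`, makes `|c|` strictly smaller until
`c = 0`, and then `g = ±T^b` with `b` even.
-/

open ModularGroup Matrix.SpecialLinearGroup CongruenceSubgroup

/-- Division by `2y` with remainder in `(-|y|, |y|)`: the parity hypothesis rules out `±y`. -/
theorem Int.exists_natAbs_add_two_mul_mul_lt {x y : ℤ} (hy : y ≠ 0) (hxy : Odd (x + y)) :
    ∃ t : ℤ, (x + 2 * t * y).natAbs < y.natAbs := by
  obtain ⟨j, hj⟩ := hxy
  have hdiv := Int.emod_add_mul_ediv x (2 * y)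
  have hnonneg := Int.emod_nonneg x (show 2 * y ≠ 0 by omega)
  have hlt := Int.emod_lt_abs x (show 2 * y ≠ 0 by omega)
  generalize x % (2 * y) = r at *
  generalize x / (2 * y) = q at *
  rw [abs_mul, abs_two] at hlt
  obtain ⟨p, hp⟩ : ∃ p, x = r + 2 * p := ⟨y * q, by linarith⟩
  rcases lt_or_gt_of_ne hy with hneg | hpos
  · rw [abs_of_neg hneg] at hlt
    by_cases hr : r < -y
    · exact ⟨-q, by rw [show x + 2 * -q * y = r by linarith]; omega⟩
    · exact ⟨1 - q, by rw [show x + 2 * (1 - q) * y = r + 2 * y by linarith]; omega⟩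
  · rw [abs_of_pos hpos] at hlt
    by_cases hr : r < y
    · exact ⟨-q, by rw [show x + 2 * -q * y = r by linarith]; omega⟩
    · exact ⟨-q - 1, by rw [show x + 2 * (-q - 1) * y = r - 2 * y by linarith]; omega⟩

lemma mem_Gamma_two_iff {g : SL(2, ℤ)} :
    g ∈ Gamma 2 ↔ Odd (g 0 0) ∧ Even (g 0 1) ∧ Even (g 1 0) ∧ Odd (g 1 1) := by
  simp [Gamma_mem, ZMod.intCast_eq_one_iff_odd, ZMod.intCast_eq_zero_iff_even]

lemma T_sq_mem_Gamma_two : T ^ 2 ∈ Gamma 2 := by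
  rw [Gamma_mem]
  decide

lemma S_mul_T_zpow_neg_two_mul_S_inv_mem_Gamma_two : S * T ^ (-2 : ℤ) * S⁻¹ ∈ Gamma 2 := by
  rw [Gamma_mem]
  decide

lemma coe_S_mul_T_zpow_mul_S_inv (n : ℤ) :
    ((S * T ^ n * S⁻¹ : SL(2, ℤ)) : Matrix (Fin 2) (Fin 2) ℤ) = !![1, 0; -n, 1] := by
  simp [coe_T_zpow, S_inv]

lemma T_zpow_mul_apply_zero_zero (n : ℤ) (g : SL(2, ℤ)) :
    (T ^ n * g) 0 0 = g 0 0 + n * g 1 0 := by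
  simp [coe_T_zpow, Matrix.mul_apply, Fin.sum_univ_two]

lemma S_mul_T_zpow_mul_S_inv_mul_apply_one_zero (n : ℤ) (g : SL(2, ℤ)) :
    (S * T ^ n * S⁻¹ * g) 1 0 = g 1 0 - n * g 0 0 := by
  rw [coe_mul, coe_S_mul_T_zpow_mul_S_inv]
  simp [Matrix.mul_apply, Fin.sum_univ_two]
  ring

lemma exists_natAbs_apply_one_zero_lt {g : SL(2, ℤ)} (hg : g ∈ Gamma 2) (hc : g 1 0 ≠ 0) :
    ∃ s t : ℤ, (((S * T ^ (-2 : ℤ) * S⁻¹) ^ s * (T ^ 2) ^ t * g) 1 0).natAbs <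
      (g 1 0).natAbs := by
  obtain ⟨ha, -, hc2, -⟩ := mem_Gamma_two_iff.mp hg
  obtain ⟨t, ht⟩ := Int.exists_natAbs_add_two_mul_mul_lt hc (ha.add_even hc2)
  set a := g 0 0 + 2 * t * g 1 0
  have ha' : Odd a := ha.add_even (by rw [mul_assoc]; exact even_two_mul _)
  obtain ⟨s, hs⟩ :=
    Int.exists_natAbs_add_two_mul_mul_lt (fun h ↦ by simp [h] at ha') (hc2.add_odd ha')
  refine ⟨s, t, ?_⟩
  have hTt : (T ^ 2) ^ t = T ^ (2 * t) := by rw [zpow_mul]; rfl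
  rw [conj_zpow, ← zpow_mul, hTt, mul_assoc, S_mul_T_zpow_mul_S_inv_mul_apply_one_zero,
    T_zpow_mul_apply_zero_zero, congrFun (T_pow_mul_apply_one _ g) 0]
  have : g 1 0 - -2 * s * (g 0 0 + 2 * t * g 1 0) = g 1 0 + 2 * s * a := by ring
  omega

section

variable {K : Subgroup SL(2, ℤ)}

lemma mem_of_mem_Gamma_two_of_apply_one_zero_eq_zero (hneg : -1 ∈ K) (hT : T ^ 2 ∈ K)
    {g : SL(2, ℤ)} (hg : g ∈ Gamma 2) (hc : g 1 0 = 0) : g ∈ K := by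
  obtain ⟨k, hk⟩ : ∃ k, g 0 1 = 2 * k := by
    obtain ⟨-, ⟨k, hk⟩, -⟩ := mem_Gamma_two_iff.mp hg
    exact ⟨k, by omega⟩
  have had : g 0 0 * g 1 1 = 1 := by
    have := g.det_coe
    rw [Matrix.det_fin_two, hc] at this
    linarith
  have hTk : T ^ (2 * k) ∈ K := by rw [zpow_mul]; exact zpow_mem (by exact_mod_cast hT) k
  rcases Int.eq_one_or_neg_one_of_mul_eq_one' had with ⟨ha, hd⟩ | ⟨ha, hd⟩
  · convert hTk
    ext i j
    fin_cases i <;> fin_cases j <;> simp [coe_T_zpow, ha, hd, hc, hk]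
  · convert mul_mem hneg (inv_mem hTk) using 1
    ext i j
    fin_cases i <;> fin_cases j <;> simp [coe_T_zpow, ha, hd, hc, hk]

theorem Gamma_two_le (hneg : -1 ∈ K) (hT : T ^ 2 ∈ K) (hL : S * T ^ (-2 : ℤ) * S⁻¹ ∈ K) :
    Gamma 2 ≤ K := by
  intro g hg
  induction h : (g 1 0).natAbs using Nat.strong_induction_on generalizing g with
  | _ n ih =>
    by_cases hc : g 1 0 = 0
    · exact mem_of_mem_Gamma_two_of_apply_one_zero_eq_zero hneg hT hg hc
    obtain ⟨s, t, hlt⟩ := exists_natAbs_apply_one_zero_lt hg hc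
    have hg' : (S * T ^ (-2 : ℤ) * S⁻¹) ^ s * (T ^ 2) ^ t * g ∈ K :=
      ih _ (h ▸ hlt) (mul_mem (mul_mem (zpow_mem S_mul_T_zpow_neg_two_mul_S_inv_mem_Gamma_two s)
        (zpow_mem T_sq_mem_Gamma_two t)) hg) rfl
    convert mul_mem (mul_mem (inv_mem (zpow_mem hT t)) (inv_mem (zpow_mem hL s))) hg' using 1
    group

end

lemma Aelt_eq : Aelt = QuotientGroup.mk S := rfl

lemma Belt_eq : Belt = QuotientGroup.mk (S * T) :=
  congrArg QuotientGroup.mk (Subtype.ext (by decide))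

lemma mk_T_sq : (QuotientGroup.mk (T ^ 2) : PSL(2, ℤ)) = Aelt * Belt * Aelt * Belt := by
  simp only [Aelt_eq, Belt_eq, ← QuotientGroup.mk_mul]
  congr 1
  decide

lemma mk_S_mul_T_zpow_neg_two_mul_S_inv :
    (QuotientGroup.mk (S * T ^ (-2 : ℤ) * S⁻¹) : PSL(2, ℤ)) = Aelt * Belt⁻¹ * Aelt * Belt⁻¹ := by
  simp only [Aelt_eq, Belt_eq, ← QuotientGroup.mk_inv, ← QuotientGroup.mk_mul]
  congr 1
  group

/-- The subgroup of `PSL₂(ℤ)` generated by `ABAB` and `AB⁻¹AB⁻¹` has finite index. -/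
theorem abab_finite_index :
    (Subgroup.closure ({Aelt * Belt * Aelt * Belt, Aelt * Belt⁻¹ * Aelt * Belt⁻¹} :
      Set PSL(2, ℤ))).FiniteIndex := by
  set H := Subgroup.closure ({Aelt * Belt * Aelt * Belt, Aelt * Belt⁻¹ * Aelt * Belt⁻¹} :
      Set PSL(2, ℤ))
  have hπ := QuotientGroup.mk'_surjective (Subgroup.center SL(2, ℤ))
  let K := H.comap (QuotientGroup.mk' (Subgroup.center SL(2, ℤ)))
  have hneg : -1 ∈ K := by
    have : (-1 : SL(2, ℤ)) ∈ Subgroup.center SL(2, ℤ) :=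
      Subgroup.mem_center_iff.mpr fun g ↦ by simp
    simp [K, (QuotientGroup.eq_one_iff _).mpr this]
  have hT : T ^ 2 ∈ K := Subgroup.subset_closure (Or.inl mk_T_sq)
  have hL : S * T ^ (-2 : ℤ) * S⁻¹ ∈ K :=
    Subgroup.subset_closure (Or.inr mk_S_mul_T_zpow_neg_two_mul_S_inv)
  have : K.FiniteIndex := Subgroup.finiteIndex_of_le (Gamma_two_le hneg hT hL)
  rw [Subgroup.finiteIndex_iff, ← Subgroup.index_comap_of_surjective H hπ]
  exact Subgroup.FiniteIndex.index_ne_zero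

end
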